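/- Let γ : S^n → ℝ₊ be a C^∞ strictly convex integrand with dual convex integrand δ, and suppose θ₀ ∈ S^n is a critical point of γ (i.e. ∇γ(θ₀) = 0 on S^n). Then γ(θ₀)·δ(−θ₀) = 1. -/

import Mathlib

open scoped RealInnerProductSpace

noncomputable def sphereInv {n : ℕ} (x : EuclideanSpace ℝ (Fin (n+1))) :
    EuclideanSpace ℝ (Fin (n+1)) := -((‖x‖^2)⁻¹ • x)

noncomputable def graphSet {n : ℕ} (γ : EuclideanSpace ℝ (Fin (n+1)) → ℝ) :
    Set (EuclideanSpace ℝ (Fin (n+1))) :=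
  (fun θ => γ θ • θ) '' Metric.sphere 0 1

def ConvexIntegrand {n : ℕ} (γ : EuclideanSpace ℝ (Fin (n+1)) → ℝ) : Prop :=
  ContinuousOn γ (Metric.sphere 0 1) ∧
  (∀ θ ∈ Metric.sphere (0 : EuclideanSpace ℝ (Fin (n+1))) 1, 0 < γ θ) ∧
  sphereInv '' graphSet γ = frontier (convexHull ℝ (sphereInv '' graphSet γ))

/-- A strictly convex integrand: the convex hull of `inv(graph γ)` is strictly convex. -/
def StrictConvexIntegrand {n : ℕ} (γ : EuclideanSpace ℝ (Fin (n+1)) → ℝ) : Prop :=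
  ConvexIntegrand γ ∧ StrictConvex ℝ (convexHull ℝ (sphereInv '' graphSet γ))

noncomputable def Wulff {n : ℕ} (γ : EuclideanSpace ℝ (Fin (n+1)) → ℝ) :
    Set (EuclideanSpace ℝ (Fin (n+1))) :=
  ⋂ θ ∈ Metric.sphere (0 : EuclideanSpace ℝ (Fin (n+1))) 1,
    {x | ⟪x, θ⟫ ≤ γ θ}

def IsDualIntegrand {n : ℕ} (γ δ : EuclideanSpace ℝ (Fin (n+1)) → ℝ) : Prop :=
  ConvexIntegrand δ ∧ sphereInv '' graphSet δ = frontier (Wulff γ)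

/-- A point `θ₀ ∈ S^n` is a critical point of `γ` on the sphere, i.e. the
(spherical) gradient of `γ` at `θ₀` vanishes. -/
def SphereCritical {n : ℕ} (γ : EuclideanSpace ℝ (Fin (n+1)) → ℝ)
    (θ₀ : EuclideanSpace ℝ (Fin (n+1))) : Prop :=
  ∀ v : EuclideanSpace ℝ (Fin (n+1)), ⟪v, θ₀⟫ = 0 → fderiv ℝ γ θ₀ v = 0

lemma sphereInv_smul_sphere {n : ℕ} {r : ℝ} (hr : 0 < r)
    {θ : EuclideanSpace ℝ (Fin (n+1))} (hθ : ‖θ‖ = 1) :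
    sphereInv (r • θ) = (-r⁻¹) • θ := by
  unfold sphereInv
  rw [norm_smul, hθ, Real.norm_eq_abs, abs_of_pos hr, mul_one, smul_smul, ← neg_smul]
  congr 1
  have : r ≠ 0 := hr.ne'
  field_simp

lemma invGraph_eq {n : ℕ} (γ : EuclideanSpace ℝ (Fin (n+1)) → ℝ)
    (hpos : ∀ θ ∈ Metric.sphere (0 : EuclideanSpace ℝ (Fin (n+1))) 1, 0 < γ θ) :
    sphereInv '' graphSet γ
      = (fun θ => (-(γ θ)⁻¹) • θ) '' Metric.sphere 0 1 := by
  rw [graphSet, Set.image_image]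
  apply Set.image_congr
  intro θ hθ
  have hθ1 : ‖θ‖ = 1 := by simpa using hθ
  exact sphereInv_smul_sphere (hpos θ hθ) hθ1

set_option maxHeartbeats 1000000 in
/-- The key support inequality at a critical point of a convex integrand. -/
lemma support_ineq {n : ℕ} (γ : EuclideanSpace ℝ (Fin (n+1)) → ℝ)
    (hsm : ContDiff ℝ (⊤ : ℕ∞) γ) (hγc : ConvexIntegrand γ)
    (θ₀ : EuclideanSpace ℝ (Fin (n+1)))
    (hθ₀ : θ₀ ∈ Metric.sphere (0 : EuclideanSpace ℝ (Fin (n+1))) 1)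
    (hcrit : ∀ v : EuclideanSpace ℝ (Fin (n+1)), ⟪v, θ₀⟫ = 0 → fderiv ℝ γ θ₀ v = 0) :
    ∀ θ ∈ Metric.sphere (0 : EuclideanSpace ℝ (Fin (n+1))) 1, γ θ₀ * ⟪θ₀, θ⟫ ≤ γ θ := by
  obtain ⟨hcont, hpos, hfr⟩ := hγc
  have hA := invGraph_eq γ hpos
  set A := (fun θ => (-(γ θ)⁻¹) • θ) '' Metric.sphere 0 1 with hAdef
  rw [hA] at hfr
  set K := convexHull ℝ A with hKdef
  have hKconv : Convex ℝ K := convex_convexHull ℝ A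
  have hAK : A ⊆ K := subset_convexHull ℝ A
  have hmemA : ∀ θ ∈ Metric.sphere (0 : EuclideanSpace ℝ (Fin (n+1))) 1,
      (-(γ θ)⁻¹) • θ ∈ A := fun θ hθ => ⟨θ, hθ, rfl⟩
  have hθ₀n : ‖θ₀‖ = 1 := by simpa using hθ₀
  have hθ₀pos : 0 < γ θ₀ := hpos θ₀ hθ₀
  -- 0 ∈ K
  have h0K : (0 : EuclideanSpace ℝ (Fin (n+1))) ∈ K := by
    set e0 : EuclideanSpace ℝ (Fin (n+1)) := EuclideanSpace.single 0 1 with he0def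
    have he0 : e0 ∈ Metric.sphere (0 : EuclideanSpace ℝ (Fin (n+1))) 1 := by
      simp [he0def, EuclideanSpace.norm_single]
    have hne0 : -e0 ∈ Metric.sphere (0 : EuclideanSpace ℝ (Fin (n+1))) 1 := by
      simpa using he0
    set s := (γ e0)⁻¹ with hs
    set t := (γ (-e0))⁻¹ with ht
    have hspos : 0 < s := inv_pos.2 (hpos _ he0)
    have htpos : 0 < t := inv_pos.2 (hpos _ hne0)
    have hp : (-s) • e0 ∈ K := hAK (hmemA e0 he0)
    have hq : t • e0 ∈ K := by
      have := hAK (hmemA (-e0) hne0)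
      simpa [smul_neg, neg_smul, ht] using this
    have := hKconv hp hq (a := t/(s+t)) (b := s/(s+t))
      (by positivity) (by positivity)
      (by field_simp; ring)
    convert this using 1
    rw [smul_smul, smul_smul, ← add_smul]
    have : t / (s + t) * -s + s / (s + t) * t = 0 := by
      field_simp
      ring
    rw [this, zero_smul]
  -- span of K is everything
  have hspan : affineSpan ℝ K = ⊤ := by
    have hsub : Submodule.span ℝ K = ⊤ := by
      have h := (EuclideanSpace.basisFun (Fin (n+1)) ℝ).toBasis.span_eq
      rw [OrthonormalBasis.coe_toBasis] at h
      have he : ⇑(EuclideanSpace.basisFun (Fin (n+1)) ℝ)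
          = (fun i => EuclideanSpace.single i (1:ℝ)) := by
        funext i; simp [EuclideanSpace.basisFun_apply]
      rw [he] at h
      rw [eq_top_iff, ← h]
      apply Submodule.span_le.2
      rintro x ⟨i, rfl⟩
      have hi : (EuclideanSpace.single i (1:ℝ)) ∈
          Metric.sphere (0 : EuclideanSpace ℝ (Fin (n+1))) 1 := by
        simp [EuclideanSpace.norm_single]
      have hpi : 0 < γ (EuclideanSpace.single i (1:ℝ)) := hpos _ hi
      have hmem : (-(γ (EuclideanSpace.single i (1:ℝ)))⁻¹) • EuclideanSpace.single i (1:ℝ) ∈ K :=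
        hAK (hmemA _ hi)
      have : EuclideanSpace.single i (1:ℝ)
          = (-(γ (EuclideanSpace.single i (1:ℝ)))) •
            ((-(γ (EuclideanSpace.single i (1:ℝ)))⁻¹) • EuclideanSpace.single i (1:ℝ)) := by
        rw [smul_smul]
        rw [show -γ (EuclideanSpace.single i (1:ℝ)) * -(γ (EuclideanSpace.single i (1:ℝ)))⁻¹ = 1 by
          field_simp]
        rw [one_smul]
      show (EuclideanSpace.single i (1:ℝ)) ∈ (Submodule.span ℝ K : Set _)
      rw [this]
      exact Submodule.smul_mem _ _ (Submodule.subset_span hmem)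
    rw [AffineSubspace.affineSpan_eq_top_iff_vectorSpan_eq_top_of_nonempty ℝ _ _ ⟨0, h0K⟩,
      vectorSpan_eq_span_vsub_set_right ℝ h0K]
    simpa using hsub
  have hint : (interior K).Nonempty := by
    rw [hKconv.interior_nonempty_iff_affineSpan_eq_top]
    exact hspan
  -- separating functional at p₀
  set p₀ : EuclideanSpace ℝ (Fin (n+1)) := (-(γ θ₀)⁻¹) • θ₀ with hp₀def
  have hp₀A : p₀ ∈ A := hmemA θ₀ hθ₀
  have hp₀ni : p₀ ∉ interior K := by
    have h1 : p₀ ∈ frontier K := hfr ▸ hp₀A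
    exact h1.2
  obtain ⟨φ, hφ⟩ := geometric_hahn_banach_open_point (hKconv.interior) isOpen_interior hp₀ni
  -- φ ≤ φ p₀ on closure K
  have key : ∀ x ∈ closure K, φ x ≤ φ p₀ := by
    intro x hx
    obtain ⟨y, hy⟩ := hint
    haveI : (nhdsWithin (0:ℝ) (Set.Ioc 0 1)).NeBot := left_nhdsWithin_Ioc_neBot one_pos
    have htend : Filter.Tendsto (fun t' : ℝ => φ (x + t' • (y - x)))
        (nhdsWithin 0 (Set.Ioc 0 1)) (nhds (φ x)) := by
      have hcont2 : Continuous fun t' : ℝ => φ (x + t' • (y - x)) := by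
        exact φ.continuous.comp (continuous_const.add (continuous_id.smul continuous_const))
      have h2 := (hcont2.tendsto 0).mono_left
        (nhdsWithin_le_nhds (s := Set.Ioc (0:ℝ) 1))
      simpa using h2
    refine le_of_tendsto htend ?_
    filter_upwards [self_mem_nhdsWithin] with t' ht'
    exact (hφ _ (hKconv.add_smul_sub_mem_interior' hx hy ht')).le
  have keyA : ∀ θ ∈ Metric.sphere (0 : EuclideanSpace ℝ (Fin (n+1))) 1,
      φ ((-(γ θ)⁻¹) • θ) ≤ φ p₀ := fun θ hθ =>
    key _ (subset_closure (hAK (hmemA θ hθ)))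
  -- tangential derivative of φ vanishes
  have htan : ∀ v : EuclideanSpace ℝ (Fin (n+1)), ⟪v, θ₀⟫ = 0 → φ v = 0 := by
    intro v hv
    rcases eq_or_ne v 0 with rfl | hvne
    · simp
    · -- normalize
      set w : EuclideanSpace ℝ (Fin (n+1)) := ‖v‖⁻¹ • v with hwdef
      have hvnorm : (0:ℝ) < ‖v‖ := norm_pos_iff.2 hvne
      have hwnorm : ‖w‖ = 1 := by
        rw [hwdef, norm_smul, norm_inv, norm_norm, inv_mul_cancel₀ hvnorm.ne']
      have hwv : ⟪w, θ₀⟫ = 0 := by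
        rw [hwdef, real_inner_smul_left, hv, mul_zero]
      suffices hφw : φ w = 0 by
        have : v = ‖v‖ • w := by rw [hwdef, smul_smul, mul_inv_cancel₀ hvnorm.ne', one_smul]
        rw [this, map_smul, hφw, smul_zero]
      -- the curve on the sphere
      set c : ℝ → EuclideanSpace ℝ (Fin (n+1)) :=
        fun t => Real.cos t • θ₀ + Real.sin t • w with hcdef
      have hc0 : c 0 = θ₀ := by simp [hcdef]
      have hθθ : ⟪θ₀, θ₀⟫ = 1 := by
        rw [real_inner_self_eq_norm_sq, hθ₀n]; norm_num
      have hww : ⟪w, w⟫ = 1 := by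
        rw [real_inner_self_eq_norm_sq, hwnorm]; norm_num
      have hθw : ⟪θ₀, w⟫ = 0 := by rw [real_inner_comm]; exact hwv
      have hcS : ∀ t, c t ∈ Metric.sphere (0 : EuclideanSpace ℝ (Fin (n+1))) 1 := by
        intro t
        rw [mem_sphere_zero_iff_norm]
        have hsq : ‖c t‖^2 = 1 := by
          rw [← real_inner_self_eq_norm_sq, hcdef]
          simp only [real_inner_add_add_self, real_inner_smul_left, real_inner_smul_right,
            hθθ, hww, hθw]
          linear_combination Real.sin_sq_add_cos_sq t
        nlinarith [norm_nonneg (c t)]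
      set G : ℝ → ℝ := fun t => -((γ (c t))⁻¹ * φ (c t)) with hGdef
      have hGt : ∀ t, G t = φ ((-(γ (c t))⁻¹) • (c t)) := by
        intro t
        rw [map_smul, smul_eq_mul, hGdef]
        ring
      have hmax : IsLocalMax G 0 := by
        apply Filter.Eventually.of_forall
        intro t
        rw [hGt t, hGt 0, hc0]
        exact keyA (c t) (hcS t)
      -- derivative of the curve
      have hcd : HasDerivAt c w 0 := by
        have h1 : HasDerivAt (fun t => Real.cos t • θ₀) ((-Real.sin 0) • θ₀) 0 :=
          (Real.hasDerivAt_cos 0).smul_const θ₀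
        have h2 : HasDerivAt (fun t => Real.sin t • w) ((Real.cos 0) • w) 0 :=
          (Real.hasDerivAt_sin 0).smul_const w
        have h3 := h1.add h2
        simp only [Real.sin_zero, neg_zero, zero_smul, Real.cos_zero, one_smul, zero_add] at h3
        exact h3
      have hd : HasFDerivAt γ (fderiv ℝ γ θ₀) (c 0) := by
        rw [hc0]
        exact (hsm.differentiable (by simp) θ₀).hasFDerivAt
      have hγcurve : HasDerivAt (fun t => γ (c t)) 0 0 := by
        have := hd.comp_hasDerivAt 0 hcd
        rwa [hcrit w hwv] at this
      have hφcurve : HasDerivAt (fun t => φ (c t)) (φ w) 0 :=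
        (φ.hasFDerivAt (x := c 0)).comp_hasDerivAt 0 hcd
      have hγne : γ (c 0) ≠ 0 := by rw [hc0]; exact hθ₀pos.ne'
      have hinv : HasDerivAt (fun t => (γ (c t))⁻¹) (-(0:ℝ) / (γ (c 0))^2) 0 :=
        hγcurve.inv hγne
      have hmul := (hinv.mul hφcurve).neg
      have hres := hmax.hasDerivAt_eq_zero hmul
      rw [hc0] at hres
      simp only [neg_zero, zero_div, zero_mul, zero_add, neg_eq_zero] at hres
      rcases mul_eq_zero.1 hres with h | h
      · exact absurd h (inv_ne_zero hθ₀pos.ne')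
      · exact h
  -- representation of φ
  have hθθ : ⟪θ₀, θ₀⟫ = 1 := by
    rw [real_inner_self_eq_norm_sq, hθ₀n]; norm_num
  have hrep : ∀ x : EuclideanSpace ℝ (Fin (n+1)), φ x = ⟪x, θ₀⟫ * φ θ₀ := by
    intro x
    have hw : ⟪x - ⟪x, θ₀⟫ • θ₀, θ₀⟫ = 0 := by
      rw [inner_sub_left, real_inner_smul_left, hθθ]
      ring
    have h1 := htan _ hw
    rw [map_sub, map_smul, smul_eq_mul] at h1
    linarith
  set cc := φ θ₀ with hccdef
  have hccne : cc ≠ 0 := by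
    intro hcc
    obtain ⟨y, hy⟩ := hint
    have h1 := hφ y hy
    rw [hrep y, hrep p₀, hcc, mul_zero, mul_zero] at h1
    exact lt_irrefl 0 h1
  have hφp₀ : φ p₀ = -(γ θ₀)⁻¹ * cc := by
    rw [hrep p₀, hp₀def, real_inner_smul_left, hθθ, mul_one]
  have hccneg : cc < 0 := by
    have h0 : φ 0 ≤ φ p₀ := key 0 (subset_closure h0K)
    rw [map_zero, hφp₀] at h0
    have hle : cc ≤ 0 := by
      by_contra hcc
      push_neg at hcc
      nlinarith [inv_pos.2 hθ₀pos]
    exact lt_of_le_of_ne hle hccne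
  -- conclude
  intro θ hθ
  have hθpos : 0 < γ θ := hpos θ hθ
  have h1 := keyA θ hθ
  rw [hrep, hφp₀, real_inner_smul_left] at h1
  -- h1 : -(γ θ)⁻¹ * ⟪θ, θ₀⟫ * cc ≤ -(γ θ₀)⁻¹ * cc
  have h2 : (γ θ)⁻¹ * ⟪θ, θ₀⟫ ≤ (γ θ₀)⁻¹ := by nlinarith
  have h3 := mul_le_mul_of_nonneg_left h2 (le_of_lt (mul_pos hθpos hθ₀pos))
  rw [real_inner_comm] at h3
  have e1 : γ θ * γ θ₀ * ((γ θ)⁻¹ * ⟪θ₀, θ⟫) = γ θ₀ * ⟪θ₀, θ⟫ := by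
    field_simp
  have e2 : γ θ * γ θ₀ * (γ θ₀)⁻¹ = γ θ := by
    field_simp
  rw [e1, e2] at h3
  exact h3

/-- If `γ` is a `C^∞` strictly convex integrand with dual `δ` and `θ₀` is a
critical point of `γ` on `S^n`, then `γ(θ₀)·δ(−θ₀) = 1`. -/
theorem stmt_16 {n : ℕ} (γ δ : EuclideanSpace ℝ (Fin (n+1)) → ℝ)
    (hsm : ContDiff ℝ (⊤ : ℕ∞) γ) (hγ : StrictConvexIntegrand γ)
    (hδ : IsDualIntegrand γ δ)
    (θ₀ : EuclideanSpace ℝ (Fin (n+1)))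
    (hθ₀ : θ₀ ∈ Metric.sphere (0 : EuclideanSpace ℝ (Fin (n+1))) 1)
    (hcrit : SphereCritical γ θ₀) :
    γ θ₀ * δ (-θ₀) = 1 := by
  obtain ⟨hγc, -⟩ := hγ
  obtain ⟨hδc, hδfr⟩ := hδ
  have hsupp := support_ineq γ hsm hγc θ₀ hθ₀ hcrit
  have hθ₀pos : 0 < γ θ₀ := hγc.2.1 θ₀ hθ₀
  have hθ₀n : ‖θ₀‖ = 1 := by simpa using hθ₀
  set x₀ : EuclideanSpace ℝ (Fin (n+1)) := γ θ₀ • θ₀ with hx₀def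
  have hx₀W : x₀ ∈ Wulff γ := by
    rw [Wulff, Set.mem_iInter₂]
    intro θ hθ
    rw [Set.mem_setOf_eq, hx₀def, real_inner_smul_left]
    exact hsupp θ hθ
  have hx₀ni : x₀ ∉ interior (Wulff γ) := by
    intro h
    rw [mem_interior_iff_mem_nhds, Metric.mem_nhds_iff] at h
    obtain ⟨ε, hε, hball⟩ := h
    have hmem : x₀ + (ε/2) • θ₀ ∈ Wulff γ := by
      apply hball
      rw [Metric.mem_ball, dist_eq_norm]
      rw [show x₀ + (ε/2) • θ₀ - x₀ = (ε/2) • θ₀ by abel]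
      rw [norm_smul, hθ₀n, mul_one, Real.norm_eq_abs, abs_of_pos (by linarith)]
      linarith
    rw [Wulff, Set.mem_iInter₂] at hmem
    have h2 := hmem θ₀ hθ₀
    rw [Set.mem_setOf_eq, inner_add_left, real_inner_smul_left, real_inner_smul_left,
      real_inner_self_eq_norm_sq, hθ₀n] at h2
    norm_num at h2
    linarith
  have hx₀fr : x₀ ∈ frontier (Wulff γ) := ⟨subset_closure hx₀W, hx₀ni⟩
  rw [← hδfr, invGraph_eq δ hδc.2.1] at hx₀fr
  obtain ⟨θ, hθS, hEq⟩ := hx₀fr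
  have hθn : ‖θ‖ = 1 := by simpa using hθS
  have hδθpos : 0 < δ θ := hδc.2.1 θ hθS
  simp only at hEq
  -- hEq : (-(δ θ)⁻¹) • θ = x₀
  have hnorm : (δ θ)⁻¹ = γ θ₀ := by
    have h1 := congrArg norm hEq
    rw [norm_smul, norm_smul, hθn, hθ₀n, mul_one, mul_one, Real.norm_eq_abs,
      Real.norm_eq_abs, abs_of_pos hθ₀pos, abs_neg, abs_of_pos (inv_pos.2 hδθpos)] at h1
    exact h1
  have hθeq : θ = -θ₀ := by
    have hsc : -(δ θ)⁻¹ = -(γ θ₀) := by rw [hnorm]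
    rw [hsc, hx₀def] at hEq
    have h3 := congrArg (fun z => (-(γ θ₀))⁻¹ • z) hEq
    simp only [smul_smul] at h3
    rw [inv_mul_cancel₀ (by simp [hθ₀pos.ne'] : -(γ θ₀) ≠ 0), one_smul] at h3
    have h4 : (-γ θ₀)⁻¹ * γ θ₀ = -1 := by field_simp
    rw [h3, h4, neg_one_smul]
  have hδval : δ (-θ₀) = (γ θ₀)⁻¹ := by
    rw [← hθeq, ← inv_inv (δ θ), hnorm]
  rw [hδval, mul_inv_cancel₀ hθ₀pos.ne']
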